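/- arXiv:1602.08996 — 2 statements merged into one kernel-verified Lean document; each statement's English description precedes it below -/
import Mathlib

section
/- Let A¹ = (i^(G(0)), i^(G(-1)), i^(G(-2)), i^(G(-3))) and A² = (i^(G(m-1)), i^(G(m)), i^(G(m+1)), i^(G(m+2))) for a polynomial G with integer coefficients and any natural number m ≥ 2. Then A¹·(1,1,1,1)ᵀ = A²·(1,1,1,1)ᵀ and (−1)^(m−1) A¹·(1,−1,1,−1)ᵀ = A²·(1,−1,1,−1)ᵀ, provided the linear coefficient a₁ of G and the sum s₁ of odd-index coefficients of G are both even. -/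
private lemma I_zpow_congr {a b : ℤ} (h : (4:ℤ) ∣ a - b) :
    Complex.I ^ a = Complex.I ^ b := by
  obtain ⟨c, hc⟩ := h
  have ha : a = b + 4 * c := by linarith
  rw [ha, zpow_add₀ Complex.I_ne_zero, zpow_mul,
    show ((4:ℤ)) = ((4:ℕ):ℤ) from rfl, zpow_natCast, Complex.I_pow_four, one_zpow, mul_one]

private lemma I_eval_congr (G : Polynomial ℤ) {a b : ℤ} (h : (4:ℤ) ∣ a - b) :
    Complex.I ^ G.eval a = Complex.I ^ G.eval b :=
  I_zpow_congr (dvd_trans h (Polynomial.sub_dvd_eval_sub a b G))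

private lemma neg_one_zpow_congr {a b : ℤ} (h : (2:ℤ) ∣ a - b) :
    (-1 : ℂ) ^ a = (-1 : ℂ) ^ b := by
  obtain ⟨c, hc⟩ := h
  have ha : a = b + 2 * c := by linarith
  rw [ha, zpow_add₀ (by norm_num : (-1:ℂ) ≠ 0), zpow_mul]
  norm_num

theorem row_vector_relations (G : Polynomial ℤ) (h0 : G.coeff 0 = 0)
    (m : ℕ) (hm : 2 ≤ m)
    (s1 : ℤ)
    (hs1 : s1 = ∑ j ∈ Finset.range (G.natDegree + 1), if Odd j then G.coeff j else 0)
    (ha1 : Even (G.coeff 1)) (hsodd : Even s1) :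
    (Complex.I ^ (G.eval 0) + Complex.I ^ (G.eval (-1)) +
        Complex.I ^ (G.eval (-2)) + Complex.I ^ (G.eval (-3)) =
      Complex.I ^ (G.eval ((m : ℤ) - 1)) + Complex.I ^ (G.eval (m : ℤ)) +
        Complex.I ^ (G.eval ((m : ℤ) + 1)) + Complex.I ^ (G.eval ((m : ℤ) + 2))) ∧
    ((-1 : ℂ) ^ ((m : ℤ) - 1) *
        (Complex.I ^ (G.eval 0) - Complex.I ^ (G.eval (-1)) +
          Complex.I ^ (G.eval (-2)) - Complex.I ^ (G.eval (-3))) =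
      Complex.I ^ (G.eval ((m : ℤ) - 1)) - Complex.I ^ (G.eval (m : ℤ)) +
        Complex.I ^ (G.eval ((m : ℤ) + 1)) - Complex.I ^ (G.eval ((m : ℤ) + 2))) := by
  have hr : (m:ℤ) % 4 = 0 ∨ (m:ℤ) % 4 = 1 ∨ (m:ℤ) % 4 = 2 ∨ (m:ℤ) % 4 = 3 := by omega
  rcases hr with hr | hr | hr | hr
  · rw [I_eval_congr G (show (4:ℤ) ∣ ((m:ℤ) - 1) - (-1) by omega),
      I_eval_congr G (show (4:ℤ) ∣ (m:ℤ) - 0 by omega),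
      I_eval_congr G (show (4:ℤ) ∣ ((m:ℤ) + 1) - (-3) by omega),
      I_eval_congr G (show (4:ℤ) ∣ ((m:ℤ) + 2) - (-2) by omega),
      neg_one_zpow_congr (show (2:ℤ) ∣ ((m:ℤ) - 1) - 1 by omega)]
    constructor <;> ring_nf <;> simp <;> ring
  · rw [I_eval_congr G (show (4:ℤ) ∣ ((m:ℤ) - 1) - 0 by omega),
      I_eval_congr G (show (4:ℤ) ∣ (m:ℤ) - (-3) by omega),
      I_eval_congr G (show (4:ℤ) ∣ ((m:ℤ) + 1) - (-2) by omega),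
      I_eval_congr G (show (4:ℤ) ∣ ((m:ℤ) + 2) - (-1) by omega),
      neg_one_zpow_congr (show (2:ℤ) ∣ ((m:ℤ) - 1) - 0 by omega)]
    constructor <;> ring_nf <;> simp <;> ring
  · rw [I_eval_congr G (show (4:ℤ) ∣ ((m:ℤ) - 1) - (-3) by omega),
      I_eval_congr G (show (4:ℤ) ∣ (m:ℤ) - (-2) by omega),
      I_eval_congr G (show (4:ℤ) ∣ ((m:ℤ) + 1) - (-1) by omega),
      I_eval_congr G (show (4:ℤ) ∣ ((m:ℤ) + 2) - 0 by omega),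
      neg_one_zpow_congr (show (2:ℤ) ∣ ((m:ℤ) - 1) - 1 by omega)]
    constructor <;> ring_nf <;> simp <;> ring
  · rw [I_eval_congr G (show (4:ℤ) ∣ ((m:ℤ) - 1) - (-2) by omega),
      I_eval_congr G (show (4:ℤ) ∣ (m:ℤ) - (-1) by omega),
      I_eval_congr G (show (4:ℤ) ∣ ((m:ℤ) + 1) - 0 by omega),
      I_eval_congr G (show (4:ℤ) ∣ ((m:ℤ) + 2) - (-3) by omega),
      neg_one_zpow_congr (show (2:ℤ) ∣ ((m:ℤ) - 1) - 0 by omega)]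
    constructor <;> ring_nf <;> simp <;> ring
end

section
/- For real a > 0 and real s > 0, ∫₀^∞ e^(−st) J₀(at) dt = (s² + a²)^(−1/2), where J₀ is the Bessel function of the first kind of order 0. -/
open MeasureTheory Real Set Filter intervalIntegral Topology
noncomputable def besselJ0 (x : ℝ) : ℝ :=
  ∑' k : ℕ, (-1) ^ k * (x / 2) ^ (2 * k) / ((Nat.factorial k : ℝ)) ^ 2

lemma prod_odd_div_even (k : ℕ) :
    ∏ i ∈ Finset.range k, ((2*(i:ℝ)+1)/(2*i+2))
      = (Nat.factorial (2*k)) / (4^k * (Nat.factorial k)^2) := by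
  induction k with
  | zero => simp [Nat.factorial]
  | succ n ih =>
    rw [Finset.prod_range_succ, ih]
    have h1 : (2*(n+1)) = (2*n+1) + 1 := by ring
    rw [h1, Nat.factorial_succ, Nat.factorial_succ, Nat.factorial_succ]
    push_cast
    have h2 : (Nat.factorial n : ℝ) ≠ 0 := by positivity
    have h3 : (4:ℝ)^n ≠ 0 := by positivity
    field_simp
    ring

lemma summable_aux (x : ℝ) : Summable (fun k : ℕ => |x| ^ (2*k) / (Nat.factorial (2*k))) := by
  have h := (Real.summable_pow_div_factorial |x|)
  exact h.comp_injective (fun m n h => by omega)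

lemma besselJ0_eq_integral (x : ℝ) :
    besselJ0 x = (1/π) * ∫ θ in (0:ℝ)..π, Real.cos (x * Real.sin θ) := by
  have hpi : (0:ℝ) < π := Real.pi_pos
  have key : ∫ θ in (0:ℝ)..π, Real.cos (x * Real.sin θ) = π * besselJ0 x := by
    rw [intervalIntegral.integral_of_le hpi.le]
    have hrep : ∀ θ : ℝ, Real.cos (x * Real.sin θ)
        = ∑' k : ℕ, (-1)^k * (x * Real.sin θ)^(2*k) / (Nat.factorial (2*k)) := by
      intro θ; exact ((Real.hasSum_cos _).tsum_eq).symm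
    calc ∫ θ in Ioc (0:ℝ) π, Real.cos (x * Real.sin θ)
        = ∫ θ in Ioc (0:ℝ) π, ∑' k : ℕ, (-1)^k * (x * Real.sin θ)^(2*k) / (Nat.factorial (2*k)) := by
          simp_rw [hrep]
      _ = ∑' k : ℕ, ∫ θ in Ioc (0:ℝ) π, (-1)^k * (x * Real.sin θ)^(2*k) / (Nat.factorial (2*k)) := by
          refine (MeasureTheory.integral_tsum_of_summable_integral_norm (fun k => ?_) ?_).symm
          · apply Continuous.integrableOn_Ioc
            continuity
          · have hb : ∀ k : ℕ, (∫ θ in Ioc (0:ℝ) π,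
                ‖(-1)^k * (x * Real.sin θ)^(2*k) / (Nat.factorial (2*k))‖)
                ≤ π * (|x| ^ (2*k) / (Nat.factorial (2*k))) := by
              intro k
              have : ∀ θ : ℝ, ‖(-1)^k * (x * Real.sin θ)^(2*k) / (Nat.factorial (2*k))‖
                  ≤ |x| ^ (2*k) / (Nat.factorial (2*k)) := by
                intro θ
                have h0 : ‖(-1)^k * (x * Real.sin θ)^(2*k) / (Nat.factorial (2*k))‖
                    = |x * Real.sin θ|^(2*k) / (Nat.factorial (2*k)) := by
                  rw [norm_div, norm_mul, norm_pow, norm_pow, norm_neg, norm_one, one_pow,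
                    one_mul, Real.norm_eq_abs, Real.norm_eq_abs, Nat.abs_cast]
                rw [h0]
                have hnum : |x * Real.sin θ|^(2*k) ≤ |x|^(2*k) := by
                  apply pow_le_pow_left₀ (abs_nonneg _)
                  rw [abs_mul]
                  calc |x| * |Real.sin θ| ≤ |x| * 1 :=
                        mul_le_mul_of_nonneg_left (abs_sin_le_one θ) (abs_nonneg _)
                    _ = |x| := mul_one _
                have hden : (0:ℝ) < (Nat.factorial (2*k) : ℝ) := by positivity
                exact div_le_div_of_nonneg_right hnum hden.le
              calc (∫ θ in Ioc (0:ℝ) π, ‖(-1)^k * (x * Real.sin θ)^(2*k) / (Nat.factorial (2*k))‖)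
                  ≤ ∫ _θ in Ioc (0:ℝ) π, |x| ^ (2*k) / (Nat.factorial (2*k)) := by
                    apply setIntegral_mono_on
                    · apply Integrable.norm
                      apply Continuous.integrableOn_Ioc; continuity
                    · exact integrableOn_const measure_Ioc_lt_top.ne
                    · exact measurableSet_Ioc
                    · intro θ _; exact this θ
                _ = π * (|x| ^ (2*k) / (Nat.factorial (2*k))) := by
                    rw [setIntegral_const, Real.volume_real_Ioc_of_le hpi.le, smul_eq_mul, sub_zero]
            refine Summable.of_nonneg_of_le (fun k => ?_) hb ((summable_aux x).mul_left π)
            positivity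
      _ = ∑' k : ℕ, π * ((-1)^k * (x/2)^(2*k) / ((Nat.factorial k : ℝ))^2) := by
          congr 1; funext k
          have : ∀ θ : ℝ, (-1:ℝ)^k * (x * Real.sin θ)^(2*k) / (Nat.factorial (2*k))
              = ((-1)^k * x^(2*k) / (Nat.factorial (2*k))) * (Real.sin θ)^(2*k) := by
            intro θ; rw [mul_pow]; ring
          simp_rw [this]
          rw [MeasureTheory.integral_const_mul]
          have hwall : ∫ θ in Ioc (0:ℝ) π, (Real.sin θ)^(2*k)
              = π * ((Nat.factorial (2*k)) / (4^k * (Nat.factorial k)^2)) := by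
            rw [← intervalIntegral.integral_of_le hpi.le]
            rw [integral_sin_pow_even, prod_odd_div_even]
          rw [hwall]
          have hf2 : (Nat.factorial (2*k) : ℝ) ≠ 0 := by positivity
          have hx4 : ((x:ℝ)/2)^(2*k) = x^(2*k) / 4^k := by
            rw [div_pow]
            congr 1
            rw [pow_mul]
            norm_num
          rw [hx4]
          field_simp
      _ = π * besselJ0 x := by
          rw [besselJ0, tsum_mul_left]
  rw [key]
  field_simp

lemma abs_besselJ0_le_one (y : ℝ) : |besselJ0 y| ≤ 1 := by
  have hpi : (0:ℝ) < π := Real.pi_pos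
  rw [besselJ0_eq_integral]
  rw [abs_mul, abs_of_pos (by positivity : (0:ℝ) < 1/π)]
  have : |∫ θ in (0:ℝ)..π, Real.cos (y * Real.sin θ)| ≤ 1 * |π - 0| := by
    rw [← Real.norm_eq_abs]
    apply intervalIntegral.norm_integral_le_of_norm_le_const
    intro θ _; rw [Real.norm_eq_abs]; exact Real.abs_cos_le_one _
  calc 1/π * |∫ θ in (0:ℝ)..π, Real.cos (y * Real.sin θ)| ≤ 1/π * (1 * |π - 0|) := by gcongr
    _ = 1 := by rw [sub_zero, abs_of_pos hpi]; field_simp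
lemma integrableOn_exp_cos (s b : ℝ) (hs : 0 < s) :
    IntegrableOn (fun t => Real.exp (-s*t) * Real.cos (b*t)) (Ioi (0:ℝ)) := by
  apply Integrable.mono (exp_neg_integrableOn_Ioi 0 hs)
  · exact (Continuous.mul (by continuity) (by continuity)).aestronglyMeasurable
  · filter_upwards with t
    simp only [Real.norm_eq_abs, abs_mul]
    rw [abs_of_pos (Real.exp_pos _)]
    nlinarith [Real.abs_cos_le_one (b*t), Real.exp_pos (-s*t), abs_nonneg (Real.cos (b*t))]

lemma laplace_cos (s b : ℝ) (hs : 0 < s) :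
    ∫ t in Ioi (0:ℝ), Real.exp (-s*t) * Real.cos (b*t) = s/(s^2+b^2) := by
  have hd : (0:ℝ) < s^2 + b^2 := by positivity
  set F : ℝ → ℝ := fun t => Real.exp (-s*t) * (b * Real.sin (b*t) - s * Real.cos (b*t)) / (s^2+b^2)
    with hF
  have hlin : ∀ t : ℝ, HasDerivAt (fun t : ℝ => b*t) b t := by
    intro t
    simpa using (hasDerivAt_id t).const_mul b
  have hderiv : ∀ t ∈ Ici (0:ℝ), HasDerivAt F (Real.exp (-s*t) * Real.cos (b*t)) t := by
    intro t _
    have h1 : HasDerivAt (fun t : ℝ => Real.exp (-s*t)) (Real.exp (-s*t) * (-s)) t := by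
      have : HasDerivAt (fun t : ℝ => -s*t) (-s) t := by
        simpa using (hasDerivAt_id t).const_mul (-s)
      exact this.exp
    have hsin : HasDerivAt (fun t : ℝ => Real.sin (b*t)) (Real.cos (b*t) * b) t := (hlin t).sin
    have hcos : HasDerivAt (fun t : ℝ => Real.cos (b*t)) (-Real.sin (b*t) * b) t := (hlin t).cos
    have h2 := (hsin.const_mul b).sub (hcos.const_mul s)
    have h3 := (h1.mul h2).div_const (s^2+b^2)
    refine h3.congr_deriv ?_
    symm
    simp only [Pi.sub_apply]
    field_simp
    ring
  have htop : Tendsto F atTop (𝓝 0) := by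
    have hbnd : ∀ t : ℝ, ‖F t‖ ≤ Real.exp (-s*t) * ((|b| + s)/(s^2+b^2)) := by
      intro t
      rw [hF]
      simp only [Real.norm_eq_abs, abs_div, abs_mul, abs_of_pos hd,
        abs_of_pos (Real.exp_pos (-s*t))]
      rw [div_le_iff₀ hd]
      have hb : |b * Real.sin (b*t) - s * Real.cos (b*t)| ≤ |b| + s := by
        calc |b * Real.sin (b*t) - s * Real.cos (b*t)|
            ≤ |b * Real.sin (b*t)| + |s * Real.cos (b*t)| := abs_sub _ _
          _ ≤ |b| * 1 + |s| * 1 := by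
              rw [abs_mul, abs_mul]
              gcongr
              · exact Real.abs_sin_le_one _
              · exact Real.abs_cos_le_one _
          _ = |b| + s := by rw [mul_one, mul_one, abs_of_pos hs]
      calc Real.exp (-s*t) * |b * Real.sin (b*t) - s * Real.cos (b*t)|
          ≤ Real.exp (-s*t) * (|b| + s) := mul_le_mul_of_nonneg_left hb (Real.exp_pos _).le
        _ = Real.exp (-s*t) * ((|b| + s)/(s^2+b^2)) * (s^2+b^2) := by field_simp
    have h0 : Tendsto (fun t : ℝ => Real.exp (-s*t)) atTop (𝓝 0) := by
      have := Real.tendsto_exp_neg_atTop_nhds_zero.comp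
        (Tendsto.const_mul_atTop hs tendsto_id)
      simpa [Function.comp_def, neg_mul] using this
    exact squeeze_zero_norm hbnd (by simpa using h0.mul_const ((|b| + s)/(s^2+b^2)))
  have h0 : ContinuousWithinAt F (Ici (0:ℝ)) 0 := by
    apply Continuous.continuousWithinAt
    apply Continuous.div_const
    exact (by continuity : Continuous fun t => Real.exp (-s*t)).mul (by continuity)
  rw [MeasureTheory.integral_Ioi_of_hasDerivAt_of_tendsto h0 (fun t ht => hderiv t (mem_Ici.2 ht.le))
    (integrableOn_exp_cos s b hs) htop]
  have hF0 : F 0 = -(s/(s^2+b^2)) := by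
    rw [hF]
    simp [neg_div]
  rw [hF0]
  ring
lemma trig_integral (s a : ℝ) (hs : 0 < s) (ha : 0 < a) :
    ∫ θ in (0:ℝ)..π, s / (s^2 + (a * Real.sin θ)^2) = π / Real.sqrt (s^2 + a^2) := by
  set c : ℝ := Real.sqrt (s^2+a^2) with hcdef
  have hc0 : 0 < c := Real.sqrt_pos.2 (by positivity)
  have hc2 : c^2 = s^2 + a^2 := Real.sq_sqrt (by positivity)
  have hcont : Continuous (fun θ : ℝ => s / (s^2 + (a * Real.sin θ)^2)) := by
    apply Continuous.div continuous_const (by continuity)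
    intro θ; positivity
  have hhalf : ∫ θ in (0:ℝ)..(π/2), s / (s^2 + (a * Real.sin θ)^2) = π/(2*c) := by
    set F : ℝ → ℝ := fun θ => (1/c) * Real.arctan (c/s * Real.tan θ) with hFdef
    have hderiv : ∀ θ ∈ Ioo (0:ℝ) (π/2), HasDerivAt F (s / (s^2 + (a * Real.sin θ)^2)) θ := by
      intro θ hθ
      have hcospos : 0 < Real.cos θ :=
        Real.cos_pos_of_mem_Ioo ⟨by linarith [hθ.1, Real.pi_pos], hθ.2⟩
      have hcos : Real.cos θ ≠ 0 := hcospos.ne'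
      have htan : HasDerivAt Real.tan (1 / Real.cos θ ^ 2) θ := Real.hasDerivAt_tan hcos
      have h1 : HasDerivAt (fun θ => c/s * Real.tan θ) (c/s * (1 / Real.cos θ ^ 2)) θ :=
        htan.const_mul (c/s)
      have h2 : HasDerivAt (fun θ => Real.arctan (c/s * Real.tan θ))
          (1 / (1 + (c/s * Real.tan θ)^2) * (c/s * (1 / Real.cos θ ^ 2))) θ :=
        by have := (Real.hasDerivAt_arctan (c/s * Real.tan θ)).comp θ h1; exact this
      have h3 := h2.const_mul (1/c)
      refine h3.congr_deriv ?_
      symm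
      rw [Real.tan_eq_sin_div_cos]
      have hsc : Real.sin θ ^ 2 = 1 - Real.cos θ ^ 2 := by
        have := Real.sin_sq_add_cos_sq θ; linarith
      have hden : s^2 + (a * Real.sin θ)^2 ≠ 0 := by positivity
      have h1c : 1 + (c/s * (Real.sin θ / Real.cos θ))^2
          = (s^2 * Real.cos θ^2 + c^2 * Real.sin θ^2) / (s^2 * Real.cos θ^2) := by
        field_simp
      rw [h1c]
      have hpos : s^2 * Real.cos θ^2 + c^2 * Real.sin θ^2 = s^2 + (a * Real.sin θ)^2 := by
        rw [hc2]; nlinarith [hsc]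
      rw [hpos]
      field_simp
    have hint : IntervalIntegrable (fun θ : ℝ => s / (s^2 + (a * Real.sin θ)^2))
        volume 0 (π/2) := hcont.intervalIntegrable _ _
    have hlo : Tendsto F (𝓝[>] (0:ℝ)) (𝓝 0) := by
      have hct : ContinuousAt F 0 := by
        have h1 : ContinuousAt Real.tan 0 := Real.continuousAt_tan.2 (by simp)
        have h2 : ContinuousAt (fun θ => c/s * Real.tan θ) 0 := continuousAt_const.mul h1
        have h3 : ContinuousAt (fun θ => Real.arctan (c/s * Real.tan θ)) 0 :=
          (Real.continuous_arctan.continuousAt).comp h2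
        exact continuousAt_const.mul h3
      have hF0 : F 0 = 0 := by simp [hFdef]
      have hcw : ContinuousWithinAt F (Ioi (0:ℝ)) 0 := hct.continuousWithinAt
      have := hcw.tendsto
      rwa [hF0] at this
    have hhi : Tendsto F (𝓝[<] (π/2)) (𝓝 (π/(2*c))) := by
      have h1 : Tendsto (fun θ => c/s * Real.tan θ) (𝓝[<] (π/2)) atTop :=
        (Real.tendsto_tan_pi_div_two).const_mul_atTop (by positivity)
      have h2 : Tendsto (fun θ => Real.arctan (c/s * Real.tan θ)) (𝓝[<] (π/2)) (𝓝 (π/2)) :=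
        (tendsto_nhds_of_tendsto_nhdsWithin Real.tendsto_arctan_atTop).comp h1
      have h3 := h2.const_mul (1/c)
      have heq : (1/c) * (π/2) = π/(2*c) := by
        rw [one_div_mul_eq_div, div_div, mul_comm]
      rw [← heq]
      exact h3
    have := intervalIntegral.integral_eq_sub_of_hasDerivAt_of_tendsto
      (by positivity : (0:ℝ) < π/2) hderiv hint hlo hhi
    rw [this, sub_zero]
  have hsym : ∫ θ in (π/2)..π, s / (s^2 + (a * Real.sin θ)^2)
      = ∫ θ in (0:ℝ)..(π/2), s / (s^2 + (a * Real.sin θ)^2) := by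
    have := intervalIntegral.integral_comp_sub_left
      (fun θ => s / (s^2 + (a * Real.sin θ)^2)) π (a := 0) (b := π/2)
    rw [sub_zero] at this
    have hhalfpi : π - π/2 = π/2 := by ring
    rw [hhalfpi] at this
    rw [← this]
    congr 1
    funext θ
    rw [Real.sin_pi_sub]
  have hsplit : ∫ θ in (0:ℝ)..π, s / (s^2 + (a * Real.sin θ)^2)
      = (∫ θ in (0:ℝ)..(π/2), s / (s^2 + (a * Real.sin θ)^2))
        + ∫ θ in (π/2)..π, s / (s^2 + (a * Real.sin θ)^2) :=
    (intervalIntegral.integral_add_adjacent_intervals (hcont.intervalIntegrable _ _)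
      (hcont.intervalIntegrable _ _)).symm
  rw [hsplit, hsym, hhalf]
  field_simp
  ring

theorem laplace_besselJ0 (s a : ℝ) (hs : 0 < s) (ha : 0 < a) :
    ∫ t in Set.Ioi (0 : ℝ), Real.exp (-s * t) * besselJ0 (a * t) =
      1 / Real.sqrt (s ^ 2 + a ^ 2) := by
  have hpi : (0:ℝ) < π := Real.pi_pos
  have step1 : ∀ t : ℝ, Real.exp (-s*t) * besselJ0 (a*t)
      = (1/π) * ∫ θ in Ioc (0:ℝ) π, Real.exp (-s*t) * Real.cos ((a * Real.sin θ) * t) := by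
    intro t
    rw [besselJ0_eq_integral (a*t), intervalIntegral.integral_of_le hpi.le,
      ← mul_assoc, mul_comm (Real.exp (-s*t)) (1/π), mul_assoc,
      ← MeasureTheory.integral_const_mul]
    congr 1
    apply MeasureTheory.integral_congr_ae
    filter_upwards with θ
    ring_nf
  have hprod : Integrable
      (fun p : ℝ × ℝ => Real.exp (-s*p.1) * Real.cos ((a * Real.sin p.2) * p.1))
      ((volume.restrict (Ioi (0:ℝ))).prod (volume.restrict (Ioc (0:ℝ) π))) := by
    have hg : Integrable (fun p : ℝ × ℝ => Real.exp (-s*p.1) * (1:ℝ))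
        ((volume.restrict (Ioi (0:ℝ))).prod (volume.restrict (Ioc (0:ℝ) π))) :=
      Integrable.mul_prod (exp_neg_integrableOn_Ioi 0 hs) (integrable_const 1)
    apply Integrable.mono hg
    · exact (Continuous.mul (by continuity) (by continuity)).aestronglyMeasurable
    · filter_upwards with p
      simp only [Real.norm_eq_abs, abs_mul, mul_one, abs_one]
      rw [abs_of_pos (Real.exp_pos _)]
      nlinarith [Real.abs_cos_le_one ((a * Real.sin p.2) * p.1), Real.exp_pos (-s*p.1),
        abs_nonneg (Real.cos ((a * Real.sin p.2) * p.1))]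
  have hlc : ∀ b : ℝ, ∫ t in Ioi (0:ℝ), Real.exp (-s*t) * Real.cos (b*t) = s/(s^2+b^2) :=
    fun b => laplace_cos s b hs
  calc ∫ t in Set.Ioi (0 : ℝ), Real.exp (-s * t) * besselJ0 (a * t)
      = ∫ t in Ioi (0:ℝ),
          (1/π) * ∫ θ in Ioc (0:ℝ) π, Real.exp (-s*t) * Real.cos ((a * Real.sin θ) * t) := by
        apply MeasureTheory.integral_congr_ae
        filter_upwards with t
        exact step1 t
    _ = (1/π) * ∫ t in Ioi (0:ℝ),
          ∫ θ in Ioc (0:ℝ) π, Real.exp (-s*t) * Real.cos ((a * Real.sin θ) * t) :=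
        MeasureTheory.integral_const_mul _ _
    _ = (1/π) * ∫ θ in Ioc (0:ℝ) π,
          ∫ t in Ioi (0:ℝ), Real.exp (-s*t) * Real.cos ((a * Real.sin θ) * t) := by
        rw [MeasureTheory.integral_integral_swap hprod]
    _ = (1/π) * ∫ θ in Ioc (0:ℝ) π, s/(s^2 + (a * Real.sin θ)^2) := by
        congr 1
        apply MeasureTheory.integral_congr_ae
        filter_upwards with θ
        exact hlc (a * Real.sin θ)
    _ = (1/π) * (π / Real.sqrt (s^2 + a^2)) := by
        rw [← intervalIntegral.integral_of_le hpi.le, trig_integral s a hs ha]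
    _ = 1 / Real.sqrt (s ^ 2 + a ^ 2) := by
        have h0 : Real.sqrt (s^2+a^2) ≠ 0 := (Real.sqrt_pos.2 (by positivity)).ne'
        field_simp
end
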